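/- Let Φ be the standard normal CDF, and suppose w > 0, ŵ ∈ R with w > |ŵ|, and τ > 0. Then 0 < 1 - Φ((ŵ+w)/τ)·Φ((w-ŵ)/τ) < (2/√(2π)) · ((w-|ŵ|)/τ)^{-1} · exp(-(w-|ŵ|)²/(2τ²)). -/

import Mathlib

/-!
Both factors are at least `y = Φ((w - |ŵ|)/τ)`, so `1 - Φ(·)Φ(·) ≤ 1 - y² < 2 (1 - y)`.
The Gaussian tail `1 - y` is then bounded by Mills' inequality
`∫ₓ^∞ e^{-t²/2} dt ≤ x⁻¹ ∫ₓ^∞ t e^{-t²/2} dt = x⁻¹ e^{-x²/2}`.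
-/

open MeasureTheory Real Set Filter

/-- The standard normal cumulative distribution function. -/
noncomputable def stdNormalCDF (x : ℝ) : ℝ :=
  (Real.sqrt (2 * Real.pi))⁻¹ * ∫ t in Set.Iic x, Real.exp (-t ^ 2 / 2)

lemma exp_neg_sq_div_two_eq (t : ℝ) : exp (-t ^ 2 / 2) = exp (-(1 / 2) * t ^ 2) := by
  ring_nf

lemma integrable_exp_neg_sq_div_two : Integrable fun t : ℝ => exp (-t ^ 2 / 2) := by
  simpa only [exp_neg_sq_div_two_eq] using integrable_exp_neg_mul_sq (b := 1 / 2) (by norm_num)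

lemma integrable_mul_exp_neg_sq_div_two : Integrable fun t : ℝ => t * exp (-t ^ 2 / 2) := by
  simpa only [exp_neg_sq_div_two_eq] using integrable_mul_exp_neg_mul_sq (b := 1 / 2) (by norm_num)

lemma integral_exp_neg_sq_div_two : ∫ t : ℝ, exp (-t ^ 2 / 2) = √(2 * π) := by
  simp only [exp_neg_sq_div_two_eq, integral_gaussian]
  norm_num [mul_comm]

lemma setIntegral_exp_neg_sq_div_two_pos {s : Set ℝ} (hs : volume s ≠ 0) :
    0 < ∫ t in s, exp (-t ^ 2 / 2) := by
  rw [setIntegral_pos_iff_support_of_nonneg_ae (ae_of_all _ fun t => (exp_pos _).le)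
    integrable_exp_neg_sq_div_two.integrableOn]
  simpa [Function.support, (exp_pos _).ne'] using pos_iff_ne_zero.mpr hs

lemma one_sub_stdNormalCDF (x : ℝ) :
    1 - stdNormalCDF x = (√(2 * π))⁻¹ * ∫ t in Ioi x, exp (-t ^ 2 / 2) := by
  have hsplit := intervalIntegral.integral_Iic_add_Ioi (b := x)
    integrable_exp_neg_sq_div_two.integrableOn integrable_exp_neg_sq_div_two.integrableOn
  rw [integral_exp_neg_sq_div_two] at hsplit
  have h2π : √(2 * π) ≠ 0 := by positivity
  rw [stdNormalCDF, eq_sub_of_add_eq hsplit, mul_sub, inv_mul_cancel₀ h2π]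
  ring

lemma stdNormalCDF_pos (x : ℝ) : 0 < stdNormalCDF x :=
  mul_pos (by positivity) (setIntegral_exp_neg_sq_div_two_pos (by simp))

lemma stdNormalCDF_lt_one (x : ℝ) : stdNormalCDF x < 1 :=
  sub_pos.mp <| one_sub_stdNormalCDF x ▸
    mul_pos (by positivity) (setIntegral_exp_neg_sq_div_two_pos (by simp))

lemma stdNormalCDF_mono : Monotone stdNormalCDF := fun _ _ hxy =>
  mul_le_mul_of_nonneg_left
    (setIntegral_mono_set integrable_exp_neg_sq_div_two.integrableOn
      (ae_of_all _ fun _ => (exp_pos _).le) (Iic_subset_Iic.mpr hxy).eventuallyLE)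
    (by positivity)

lemma integral_Ioi_mul_exp_neg_sq_div_two (x : ℝ) :
    ∫ t in Ioi x, t * exp (-t ^ 2 / 2) = exp (-x ^ 2 / 2) := by
  have hderiv (t : ℝ) : HasDerivAt (fun t => -exp (-t ^ 2 / 2)) (t * exp (-t ^ 2 / 2)) t :=
    (((hasDerivAt_pow 2 t).fun_neg.div_const 2).exp).fun_neg.congr_deriv (by norm_num; ring)
  have hlim : Tendsto (fun t : ℝ => -exp (-t ^ 2 / 2)) atTop (nhds 0) := by
    have hsq : Tendsto (fun t : ℝ => -t ^ 2 / 2) atTop atBot :=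
      (tendsto_neg_atTop_atBot.comp (tendsto_pow_atTop two_ne_zero)).atBot_div_const two_pos
    simpa using (tendsto_exp_atBot.comp hsq).neg
  rw [integral_Ioi_of_hasDerivAt_of_tendsto' (fun t _ => hderiv t)
    integrable_mul_exp_neg_sq_div_two.integrableOn hlim]
  ring

lemma integral_Ioi_exp_neg_sq_div_two_le {x : ℝ} (hx : 0 < x) :
    ∫ t in Ioi x, exp (-t ^ 2 / 2) ≤ x⁻¹ * exp (-x ^ 2 / 2) := by
  rw [← integral_Ioi_mul_exp_neg_sq_div_two, ← integral_const_mul]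
  refine setIntegral_mono_on integrable_exp_neg_sq_div_two.integrableOn
    (integrable_mul_exp_neg_sq_div_two.integrableOn.const_mul _) measurableSet_Ioi fun t ht => ?_
  have hxt : 1 ≤ x⁻¹ * t := by rw [inv_mul_eq_div, one_le_div hx]; exact le_of_lt ht
  rw [← mul_assoc]
  exact le_mul_of_one_le_left (exp_pos _).le hxt

lemma one_sub_stdNormalCDF_le {x : ℝ} (hx : 0 < x) :
    1 - stdNormalCDF x ≤ (√(2 * π))⁻¹ * x⁻¹ * exp (-x ^ 2 / 2) := by
  rw [one_sub_stdNormalCDF, mul_assoc]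
  gcongr
  exact integral_Ioi_exp_neg_sq_div_two_le hx

lemma one_sub_mul_lt_two_mul_one_sub {a b y : ℝ} (hy₀ : 0 < y) (hy₁ : y < 1)
    (ha : y ≤ a) (hb : y ≤ b) : 1 - a * b < 2 * (1 - y) := by
  have : y * y ≤ a * b := mul_le_mul ha hb hy₀.le (hy₀.le.trans ha)
  nlinarith

theorem stmt_8_general (w w' τ : ℝ) (hw' : |w'| < w) (hτ : 0 < τ) :
    0 < 1 - stdNormalCDF ((w' + w) / τ) * stdNormalCDF ((w - w') / τ) ∧
      1 - stdNormalCDF ((w' + w) / τ) * stdNormalCDF ((w - w') / τ) <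
        2 / Real.sqrt (2 * Real.pi) * ((w - |w'|) / τ)⁻¹ *
          Real.exp (-(w - |w'|) ^ 2 / (2 * τ ^ 2)) := by
  set x := (w - |w'|) / τ
  have hx : 0 < x := div_pos (by linarith) hτ
  have hexp : -x ^ 2 / 2 = -(w - |w'|) ^ 2 / (2 * τ ^ 2) := by
    simp only [x, div_pow]
    field_simp
  have hle₁ : x ≤ (w' + w) / τ := div_le_div_of_nonneg_right (by linarith [neg_abs_le w']) hτ.le
  have hle₂ : x ≤ (w - w') / τ := div_le_div_of_nonneg_right (by linarith [le_abs_self w']) hτ.le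
  constructor
  · have := mul_lt_mul'' (stdNormalCDF_lt_one ((w' + w) / τ)) (stdNormalCDF_lt_one ((w - w') / τ))
      (stdNormalCDF_pos _).le (stdNormalCDF_pos _).le
    linarith
  · calc _ < 2 * (1 - stdNormalCDF x) :=
          one_sub_mul_lt_two_mul_one_sub (stdNormalCDF_pos x) (stdNormalCDF_lt_one x)
            (stdNormalCDF_mono hle₁) (stdNormalCDF_mono hle₂)
      _ ≤ 2 * ((√(2 * π))⁻¹ * x⁻¹ * exp (-x ^ 2 / 2)) := by
          gcongr
          exact one_sub_stdNormalCDF_le hx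
      _ = _ := by rw [hexp]; ring

/-- For `w > |w'|` and `τ > 0`,
`0 < 1 - Φ((w'+w)/τ)Φ((w-w')/τ) < (2/√(2π)) ((w-|w'|)/τ)⁻¹ exp(-(w-|w'|)²/(2τ²))`. -/
theorem stmt_8 (w w' τ : ℝ) (hw : 0 < w) (hw' : |w'| < w) (hτ : 0 < τ) :
    0 < 1 - stdNormalCDF ((w' + w) / τ) * stdNormalCDF ((w - w') / τ) ∧
      1 - stdNormalCDF ((w' + w) / τ) * stdNormalCDF ((w - w') / τ) <
        2 / Real.sqrt (2 * Real.pi) * ((w - |w'|) / τ)⁻¹ *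
          Real.exp (-(w - |w'|) ^ 2 / (2 * τ ^ 2)) :=
  stmt_8_general w w' τ hw' hτ
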